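/- For any fixed shares x₁, x₂, x₃ ∈ Z_p summing to x, if r₁, r₂, r₃ are independent and uniform in Z_p, then the refreshed shares (x₁', x₂', x₃') with x_i' = x_i + σ_i (σ₁ = r₁ − r₃, σ₂ = r₂ − r₁, σ₃ = r₃ − r₂ mod p) are uniformly distributed over all triples in Z_p³ summing to x. -/
import Mathlib

/-- Resharing produces a fresh uniform additive sharing of the same secret:
with `r₁, r₂, r₃` i.i.d. uniform, the refreshed triple is uniform over all
triples in `(ZMod p)³` summing to `x`. -/
theorem resharing_uniform (p : ℕ) [Fact p.Prime] (x x₁ x₂ x₃ : ZMod p)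
    (h : x₁ + x₂ + x₃ = x) :
    ∀ v : ZMod p × ZMod p × ZMod p,
      ((PMF.uniformOfFintype (ZMod p × ZMod p × ZMod p)).map
          (fun r => (x₁ + (r.1 - r.2.2), x₂ + (r.2.1 - r.1), x₃ + (r.2.2 - r.2.1)))) v
        = if v.1 + v.2.1 + v.2.2 = x then ((p : ENNReal) ^ 2)⁻¹ else 0 := by
  intro v
  have hp : (p : ENNReal) ≠ 0 := by
    exact_mod_cast Nat.cast_ne_zero.mpr (Fact.out (p := p.Prime)).pos.ne'
  have hpt : (p : ENNReal) ≠ ⊤ := ENNReal.natCast_ne_top p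
  set f : ZMod p × ZMod p × ZMod p → ZMod p × ZMod p × ZMod p :=
    fun r => (x₁ + (r.1 - r.2.2), x₂ + (r.2.1 - r.1), x₃ + (r.2.2 - r.2.1)) with hf
  rw [PMF.map_apply, tsum_fintype]
  simp only [PMF.uniformOfFintype_apply]
  have hcard : (Fintype.card (ZMod p × ZMod p × ZMod p) : ENNReal) = (p:ENNReal)^3 := by
    simp [ZMod.card, pow_succ, mul_comm, mul_assoc]
  rw [← Finset.sum_filter, Finset.sum_const, nsmul_eq_mul, hcard]
  have hfiber : (Finset.univ.filter (fun a => v = f a)).card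
      = if v.1 + v.2.1 + v.2.2 = x then p else 0 := by
    split_ifs with hs
    · have : Finset.univ.filter (fun a => v = f a)
          = Finset.univ.image (fun r₁ : ZMod p =>
              (r₁, r₁ + (v.2.1 - x₂), r₁ - (v.1 - x₁))) := by
        ext a
        simp only [Finset.mem_filter, Finset.mem_univ, true_and, Finset.mem_image, hf]
        constructor
        · rintro he
          obtain ⟨ha1, ha2⟩ := Prod.mk.injEq .. ▸ he
          obtain ⟨ha2, ha3⟩ := Prod.mk.injEq .. ▸ ha2
          refine ⟨a.1, ?_⟩
          have h2 : a.2.1 = a.1 + (v.2.1 - x₂) := by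
            rw [ha2]; ring
          have h3 : a.2.2 = a.1 - (v.1 - x₁) := by
            rw [ha1]; ring
          exact Prod.ext rfl (Prod.ext h2.symm h3.symm)
        · rintro ⟨r₁, rfl⟩
          have hv3 : v.2.2 = x₃ + ((r₁ - (v.1 - x₁)) - (r₁ + (v.2.1 - x₂))) := by
            have : v.1 + v.2.1 + v.2.2 = x₁ + x₂ + x₃ := by rw [hs, ← h]
            linear_combination this
          exact Prod.ext (by simp) (Prod.ext (by simp) hv3)
      rw [this, Finset.card_image_of_injective _ (fun a b hab => (Prod.mk.injEq .. ▸ hab).1),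
        Finset.card_univ, ZMod.card]
    · rw [Finset.card_eq_zero]
      ext a
      simp only [Finset.mem_filter, Finset.mem_univ, true_and, Finset.notMem_empty,
        iff_false, hf]
      intro he
      apply hs
      obtain ⟨h1, h2, h3⟩ : v.1 = x₁ + (a.1 - a.2.2) ∧ v.2.1 = x₂ + (a.2.1 - a.1)
          ∧ v.2.2 = x₃ + (a.2.2 - a.2.1) := by
        refine ⟨congrArg Prod.fst he, ?_, ?_⟩
        · exact congrArg (Prod.fst ∘ Prod.snd) he
        · exact congrArg (Prod.snd ∘ Prod.snd) he
      rw [h1, h2, h3, ← h]; ring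
  rw [hfiber]
  split_ifs with hs
  · rw [pow_succ, ENNReal.mul_inv (by left; exact pow_ne_zero _ hp) (by left; exact ENNReal.pow_ne_top hpt),
      ← mul_assoc, mul_right_comm, ENNReal.mul_inv_cancel hp hpt, one_mul]
  · simp
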